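/- arXiv:2202.01960 — 2 statements merged into one kernel-verified Lean document; each statement's English description precedes it below -/
import Mathlib

section
/- Let X be a PSCA(v, t, λ) with v ≥ t ≥ 2 and λ ≥ 1. Then for every symbol w ∈ [v] and every integer s with 1 ≤ s < t, (1/(t!·λ)) · Σ_{j=0}^{v−1} j^s · d_w(j) = (1/v) · Σ_{i=0}^{v−1} i^s. In particular, the power sums Σ_j j^s d_w(j) for 1 ≤ s < t are independent of the symbol w. -/
open scoped Classical

/-- A permutation `π` of `[v]` covers a sequence `s` of `t` distinct symbols if the
symbols appear in `π` in the given order, i.e. `π⁻¹(s 0) < ⋯ < π⁻¹(s (t-1))`. -/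
def Covers {v t : ℕ} (π : Equiv.Perm (Fin v)) (s : Fin t → Fin v) : Prop :=
  StrictMono fun i => π.symm (s i)

/-- `X` is a perfect sequence covering array PSCA(v, t, λ): every sequence of `t`
distinct symbols of `[v]` is covered by exactly `λ` permutations of `X` (with multiplicity). -/
def IsPSCA (v t l : ℕ) (X : Multiset (Equiv.Perm (Fin v))) : Prop :=
  ∀ s : Fin t → Fin v, Function.Injective s → X.countP (fun π => Covers π s) = l

/-- `dcount v X w j` is the number of permutations `π` in `X` (with multiplicity)
such that `π(j) = w`. -/
noncomputable def dcount (v : ℕ) (X : Multiset (Equiv.Perm (Fin v))) (w : Fin v) (j : ℕ) : ℕ :=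
  X.countP fun π => ∃ p : Fin v, (p : ℕ) = j ∧ π p = w

/-!
A PSCA(v, t, λ) is also a PSCA(v, k, λ·t!/k!) for every k ≤ t: fixing a symbol `x` outside an
injective `k`-sequence `u`, every permutation covering `u` covers exactly one of the `k + 1`
sequences obtained by inserting `x` into `u`.

Pairs (π, set of `r` positions before π⁻¹(w)) correspond to sequences `u` of `r` symbols such
that π covers `u` followed by `w`, so for `r < t` the binomial moment `Σ_π C(π⁻¹(w), r)` equals
(t!λ/(r+1)!)·(v-1)(v-2)⋯(v-r) = (t!λ/v)·Σ_{i<v} C(i, r). The identity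
`j·C(j, r) = r·C(j, r) + (r+1)·C(j, r+1)` transfers this equality to the functions
`j ↦ j^e·C(j, r)` with `e + r < t`, in particular to `j ↦ j^s` for `s < t`; finally
`Σ_j j^s·d_w(j) = Σ_π (π⁻¹(w))^s`.
-/

open Finset Function

theorem Nat.mul_choose_eq_add (j r : ℕ) :
    j * j.choose r = r * j.choose r + (r + 1) * j.choose (r + 1) := by
  rcases le_or_gt r j with h | h
  · obtain ⟨d, rfl⟩ := Nat.exists_eq_add_of_le h
    rw [mul_comm (r + 1), Nat.choose_succ_right_eq, Nat.add_sub_cancel_left]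
    ring
  · simp [Nat.choose_eq_zero_of_lt h, Nat.choose_eq_zero_of_lt (h.trans (Nat.lt_succ_self r))]

theorem Nat.sum_range_choose_eq_choose_succ (n r : ℕ) :
    ∑ i ∈ range n, i.choose r = n.choose (r + 1) := by
  induction n with
  | zero => simp
  | succ n ih => rw [sum_range_succ, ih, Nat.choose_succ_succ', add_comm]

namespace Fin

theorem comp_insertNth {α β : Type*} {n : ℕ} (g : α → β) (q : Fin (n + 1)) (x : α)
    (f : Fin n → α) : g ∘ q.insertNth x f = q.insertNth (g x) (g ∘ f) := by
  ext j
  cases j using q.succAboveCases <;> simp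

theorem strictMono_snoc_iff {α : Type*} [Preorder α] {n : ℕ} {f : Fin n → α} {x : α} :
    StrictMono (snoc f x : Fin (n + 1) → α) ↔ StrictMono f ∧ ∀ i, f i < x := by
  rw [← insertNth_last', strictMono_insertNth_iff]
  simp [castSucc_lt_last]

theorem existsUnique_strictMono_insertNth {α : Type*} [LinearOrder α] {n : ℕ} {f : Fin n → α}
    (hf : StrictMono f) {x : α} (hx : x ∉ Set.range f) :
    ∃! q : Fin (n + 1), StrictMono (q.insertNth x f) := by
  set below : Finset (Fin n) := {i | f i < x}
  have hq : #below < n + 1 := Nat.lt_succ_of_le ((card_filter_le _ _).trans_eq (by simp))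
  have hmono : StrictMono ((⟨#below, hq⟩ : Fin (n + 1)).insertNth x f) := by
    refine (strictMono_insertNth_iff _ _ _).2 ⟨hf, fun i hi => ?_, fun i hi => ?_⟩
    · by_contra! h
      have : below ⊆ Iio i := fun j hj =>
        mem_Iio.2 (hf.lt_iff_lt.1 ((mem_filter.1 hj).2.trans_le h))
      have := card_le_card this
      simp only [card_Iio, lt_def, val_castSucc] at this hi
      omega
    · by_contra! h
      have hlt : f i < x := h.lt_of_ne fun e => hx ⟨i, e⟩
      have : Iic i ⊆ below := fun j hj =>
        mem_filter.2 ⟨mem_univ _, (hf.monotone (mem_Iic.1 hj)).trans_lt hlt⟩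
      have := card_le_card this
      simp only [card_Iic, le_def, val_castSucc] at this hi
      omega
  refine ⟨_, hmono, fun q hq' => hmono.injective ?_⟩
  have h := (hq'.range_inj hmono).1 (by rw [range_insertNth, range_insertNth])
  rw [insertNth_apply_same, ← h, insertNth_apply_same]

theorem card_strictMono_snoc {n r : ℕ} (z : Fin n) :
    #{d : Fin r → Fin n | StrictMono (snoc d z : Fin (r + 1) → Fin n)} = (z : ℕ).choose r := by
  let e : {d : Fin r → Fin n // StrictMono (snoc d z : Fin (r + 1) → Fin n)} ≃
      (Fin r ↪o Set.Iio z) :=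
    { toFun := fun d => OrderEmbedding.ofStrictMono
        (fun j => ⟨d.1 j, (strictMono_snoc_iff.1 d.2).2 j⟩)
        fun _ _ h => (strictMono_snoc_iff.1 d.2).1 h
      invFun := fun f => ⟨fun j => f j, strictMono_snoc_iff.2 ⟨f.strictMono, fun j => (f j).2⟩⟩
      left_inv := fun _ => rfl
      right_inv := fun _ => rfl }
  rw [← Fintype.card_subtype, ← Nat.card_eq_fintype_card, Nat.card_congr e,
    Nat.card_congr Set.powersetCard.ofFinEmbEquiv, Set.powersetCard.card]
  simp

theorem card_injective_snoc {n r : ℕ} (w : Fin n) :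
    #{u : Fin r → Fin n | Injective (snoc u w : Fin (r + 1) → Fin n)} =
      (n - 1).descFactorial r := by
  let e : {u : Fin r → Fin n // Injective (snoc u w : Fin (r + 1) → Fin n)} ≃
      (Fin r ↪ {y // y ≠ w}) :=
    { toFun := fun u => ⟨fun j => ⟨u.1 j, fun h => (snoc_injective_iff.1 u.2).2 ⟨j, h⟩⟩,
        fun _ _ h => (snoc_injective_iff.1 u.2).1 (congrArg Subtype.val h)⟩
      invFun := fun f => ⟨fun j => f j, snoc_injective_iff.2
        ⟨Subtype.val_injective.comp f.injective, fun ⟨j, h⟩ => (f j).2 h⟩⟩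
      left_inv := fun _ => rfl
      right_inv := fun _ => rfl }
  rw [← Fintype.card_subtype, Fintype.card_congr e, Fintype.card_embedding_eq]
  simp

end Fin

namespace Multiset

variable {ι β : Type*}

theorem sum_mul_countP (s : Finset ι) (X : Multiset β) (f : ι → ℕ) (P : ι → β → Prop)
    [∀ i, DecidablePred (P i)] :
    ∑ i ∈ s, f i * X.countP (P i) = (X.map fun b => ∑ i ∈ s with P i b, f i).sum := by
  induction X using Multiset.induction_on with
  | empty => simp
  | cons b X ih => simp [countP_cons, mul_add, sum_add_distrib, ih, sum_filter, add_comm]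

theorem countP_eq_sum_countP [Fintype ι] (X : Multiset β) {p : β → Prop} {P : ι → β → Prop}
    [DecidablePred p] [∀ i, DecidablePred (P i)] (hP : ∀ i b, P i b → p b)
    (hp : ∀ b, p b → ∃! i, P i b) :
    X.countP p = ∑ i, X.countP (P i) := by
  induction X using Multiset.induction_on with
  | empty => simp
  | cons b X ih =>
    have : (if p b then 1 else 0) = #{i | P i b} := by
      split_ifs with h
      · exact ((Fintype.existsUnique_iff_card_one _).1 (hp b h)).symm
      · exact (Finset.card_eq_zero.2 (filter_eq_empty_iff.2 fun i _ hi => h (hP i b hi))).symm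
    simp only [countP_cons, ih, sum_add_distrib, this, card_filter]

theorem sum_map_pow_eq_of_sum_map_choose_eq {M N : Multiset ℕ} {a b t : ℕ}
    (h : ∀ r < t, a * (M.map (·.choose r)).sum = b * (N.map (·.choose r)).sum) {s : ℕ}
    (hs : s < t) : a * (M.map (· ^ s)).sum = b * (N.map (· ^ s)).sum := by
  suffices key : ∀ e r, e + r < t →
      a * (M.map fun j => j ^ e * j.choose r).sum = b * (N.map fun j => j ^ e * j.choose r).sum by
    simpa using key s 0 (by omega)
  intro e
  induction e with
  | zero => intro r hr; simpa using h r (by omega)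
  | succ e ih =>
    intro r hr
    have expand (K : Multiset ℕ) : (K.map fun j => j ^ (e + 1) * j.choose r).sum =
        r * (K.map fun j => j ^ e * j.choose r).sum +
          (r + 1) * (K.map fun j => j ^ e * j.choose (r + 1)).sum := by
      rw [← sum_map_mul_left, ← sum_map_mul_left, ← sum_map_add]
      congr 1
      refine map_congr rfl fun j _ => ?_
      rw [pow_succ, mul_assoc, Nat.mul_choose_eq_add]
      ring
    rw [expand, expand, mul_add, mul_add, mul_left_comm a, mul_left_comm a (r + 1),
      ih r (by omega), ih (r + 1) (by omega)]
    ring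

end Multiset

section PSCA

variable {v : ℕ}

theorem Covers.injective {t : ℕ} {π : Equiv.Perm (Fin v)} {s : Fin t → Fin v} (h : Covers π s) :
    Injective s :=
  StrictMono.injective h |>.of_comp

theorem covers_snoc_iff {r : ℕ} {π : Equiv.Perm (Fin v)} {u : Fin r → Fin v} {w : Fin v} :
    Covers π (Fin.snoc u w) ↔
      StrictMono (Fin.snoc (π.symm ∘ u) (π.symm w) : Fin (r + 1) → Fin v) := by
  rw [← Fin.comp_snoc]; rfl

theorem covers_insertNth_iff {k : ℕ} {π : Equiv.Perm (Fin v)} {q : Fin (k + 1)} {x : Fin v}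
    {u : Fin k → Fin v} :
    Covers π (q.insertNth x u) ↔ StrictMono (q.insertNth (π.symm x) (π.symm ∘ u)) := by
  rw [← Fin.comp_insertNth]; rfl

theorem card_covers_snoc {r : ℕ} (π : Equiv.Perm (Fin v)) (w : Fin v) :
    #{u : Fin r → Fin v | Covers π (Fin.snoc u w)} = (π.symm w : ℕ).choose r := by
  rw [← Fin.card_strictMono_snoc]
  refine card_nbij' (π.symm ∘ ·) (π ∘ ·) ?_ ?_ ?_ ?_ <;> intro u <;>
    simp [covers_snoc_iff, ← Function.comp_assoc]

theorem IsPSCA.of_succ {k m : ℕ} {X : Multiset (Equiv.Perm (Fin v))} (hX : IsPSCA v (k + 1) m X)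
    (hk : k < v) : IsPSCA v k ((k + 1) * m) X := by
  intro u hu
  obtain ⟨x, hx⟩ : ∃ x, x ∉ Set.range u := by
    by_contra! h
    have := Fintype.card_le_of_surjective u h
    simp only [Fintype.card_fin] at this
    omega
  have hinj (q : Fin (k + 1)) : Injective (q.insertNth x u) := by
    rw [← q.cycleRange.symm.injective_comp, Fin.insertNth_comp_cycleRange_symm]
    exact Fin.cons_injective_iff.2 ⟨hx, hu⟩
  rw [Multiset.countP_eq_sum_countP X (P := fun (q : Fin (k + 1)) π => Covers π (q.insertNth x u))]
  · simp [hX _ (hinj _)]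
  · intro q π h
    rw [covers_insertNth_iff, Fin.strictMono_insertNth_iff] at h
    exact h.1
  · intro π h
    simp_rw [covers_insertNth_iff]
    refine Fin.existsUnique_strictMono_insertNth h ?_
    rintro ⟨j, hj⟩
    exact hx ⟨j, π.symm.injective hj⟩

theorem IsPSCA.of_le {t l k : ℕ} {X : Multiset (Equiv.Perm (Fin v))} (hX : IsPSCA v t l X)
    (htv : t ≤ v) (hkt : k ≤ t) : IsPSCA v k (t.descFactorial (t - k) * l) X := by
  induction h : t - k generalizing k with
  | zero =>
    obtain rfl : k = t := by omega
    simpa using hX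
  | succ d ih =>
    have := (ih (k := k + 1) (by omega) (by omega)).of_succ (by omega)
    rwa [Nat.descFactorial_succ, show t - d = k + 1 by omega, mul_assoc]

theorem IsPSCA.sum_map_choose {r m : ℕ} {X : Multiset (Equiv.Perm (Fin v))}
    (hX : IsPSCA v (r + 1) m X) (w : Fin v) :
    (X.map fun π => (π.symm w : ℕ).choose r).sum = (v - 1).descFactorial r * m := by
  have hcount (u : Fin r → Fin v) : X.countP (Covers · (Fin.snoc u w)) =
      if Injective (Fin.snoc u w : Fin (r + 1) → Fin v) then m else 0 := by
    split_ifs with h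
    · exact hX _ h
    · exact Multiset.countP_eq_zero.2 fun π _ hπ => h hπ.injective
  calc (X.map fun π => (π.symm w : ℕ).choose r).sum
      = ∑ u : Fin r → Fin v, 1 * X.countP (Covers · (Fin.snoc u w)) := by
        rw [Multiset.sum_mul_countP]
        simp [card_covers_snoc]
    _ = (v - 1).descFactorial r * m := by
        simp [hcount, Finset.sum_ite, Fin.card_injective_snoc]

theorem IsPSCA.mul_sum_map_choose {t l : ℕ} {X : Multiset (Equiv.Perm (Fin v))}
    (hX : IsPSCA v t l X) (htv : t ≤ v) (w : Fin v) {r : ℕ} (hr : r < t) :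
    v * (X.map fun π => (π.symm w : ℕ).choose r).sum =
      t.factorial * l * ∑ i ∈ range v, i.choose r := by
  obtain ⟨n, rfl⟩ : ∃ n, v = n + 1 := ⟨v - 1, by omega⟩
  have hfact := t.factorial_mul_descFactorial (show t - (r + 1) ≤ t by omega)
  rw [show t - (t - (r + 1)) = r + 1 by omega] at hfact
  rw [(hX.of_le htv hr).sum_map_choose, Nat.sum_range_choose_eq_choose_succ, ← hfact,
    Nat.add_sub_cancel, ← mul_assoc, ← Nat.succ_descFactorial_succ,
    Nat.descFactorial_eq_factorial_mul_choose]
  ring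

theorem IsPSCA.mul_sum_map_pow {t l : ℕ} {X : Multiset (Equiv.Perm (Fin v))}
    (hX : IsPSCA v t l X) (htv : t ≤ v) (w : Fin v) {s : ℕ} (hs : s < t) :
    v * (X.map fun π => (π.symm w : ℕ) ^ s).sum = t.factorial * l * ∑ i ∈ range v, i ^ s := by
  have := Multiset.sum_map_pow_eq_of_sum_map_choose_eq (a := v) (b := t.factorial * l)
    (M := X.map fun π => (π.symm w : ℕ)) (N := (range v).val)
    (fun r hr => by rw [Multiset.map_map]; exact hX.mul_sum_map_choose htv w hr) hs
  rwa [Multiset.map_map] at this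

theorem sum_mul_dcount (X : Multiset (Equiv.Perm (Fin v))) (w : Fin v) (f : ℕ → ℕ) :
    ∑ j ∈ range v, f j * dcount v X w j = (X.map fun π => f (π.symm w)).sum := by
  unfold dcount
  rw [Multiset.sum_mul_countP _ _ _
    fun j (π : Equiv.Perm (Fin v)) => ∃ p : Fin v, (p : ℕ) = j ∧ π p = w]
  congr 1
  refine Multiset.map_congr rfl fun π _ => ?_
  have : {j ∈ range v | ∃ p : Fin v, (p : ℕ) = j ∧ π p = w} = {(π.symm w : ℕ)} := by
    ext j
    simp only [mem_filter, mem_range, mem_singleton, ← Equiv.eq_symm_apply, exists_eq_right]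
    exact ⟨fun h => h.2.symm, fun h => ⟨h ▸ (π.symm w).isLt, h.symm⟩⟩
  rw [this, sum_singleton]

end PSCA

theorem stmt5_general (v t l : ℕ) (htv : t ≤ v) (hl : 1 ≤ l)
    (X : Multiset (Equiv.Perm (Fin v))) (hX : IsPSCA v t l X)
    (w : Fin v) (s : ℕ) (hst : s < t) :
    (1 / ((t.factorial : ℚ) * l)) * ∑ j ∈ Finset.range v, (j : ℚ) ^ s * dcount v X w j =
      (1 / (v : ℚ)) * ∑ i ∈ Finset.range v, (i : ℚ) ^ s := by
  have key : v * ∑ j ∈ range v, j ^ s * dcount v X w j =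
      t.factorial * l * ∑ i ∈ range v, i ^ s := by
    rw [sum_mul_dcount]
    exact hX.mul_sum_map_pow htv w hst
  have hv : (v : ℚ) ≠ 0 := by exact_mod_cast (show v ≠ 0 by omega)
  have hc : (t.factorial : ℚ) * l ≠ 0 := by positivity
  field_simp
  rw [mul_comm]
  exact_mod_cast key

/-- Theorem 2.2: for a PSCA(v, t, λ), every symbol `w` and every `1 ≤ s < t` satisfy
`(1/(t!·λ)) Σ_j j^s d_w(j) = (1/v) Σ_i i^s`. -/
theorem stmt5 (v t l : ℕ) (ht : 2 ≤ t) (htv : t ≤ v) (hl : 1 ≤ l)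
    (X : Multiset (Equiv.Perm (Fin v))) (hX : IsPSCA v t l X)
    (w : Fin v) (s : ℕ) (hs1 : 1 ≤ s) (hst : s < t) :
    (1 / ((t.factorial : ℚ) * l)) * ∑ j ∈ Finset.range v, (j : ℚ) ^ s * dcount v X w j =
      (1 / (v : ℚ)) * ∑ i ∈ Finset.range v, (i : ℚ) ^ s :=
  stmt5_general v t l htv hl X hX w s hst
end

section
/- Let X be a PSCA(v, t, λ) and let w, w′ be distinct symbols of [v]. Let d_w be the distribution vector of w in X and d′_w the distribution vector of w in the PSCA X′ obtained by deleting the symbol w′ from every permutation of X. Then for 0 ≤ k ≤ v−2, the partial sum δ_k = Σ_{i=0}^{k} (d′_w(i) − d_w(i)) satisfies 0 ≤ δ_k ≤ d′_w(k). -/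
open scoped Classical

/-- Deleting the symbol `w'` from a permutation of `Fin (n+1)`, relabelling the remaining
symbols to `Fin n` in an order-preserving way and keeping their relative order. -/
def deleteSym {n : ℕ} (w' : Fin (n + 1)) (π : Equiv.Perm (Fin (n + 1))) : Equiv.Perm (Fin n) :=
  Equiv.removeNone ((finSuccEquiv' (π.symm w')).symm.trans (π.trans (finSuccEquiv' w')))

/-!
Deleting `w'` lowers the position of `w` by one if `w'` precedes `w` and leaves it unchanged
otherwise. Hence `δ_k`, the number of permutations with `w` in the first `k + 1` columns after the
deletion but not before, counts the permutations in which `w'` precedes `w` and `w` stands in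
column `k + 1`. Each of these has `w` in column `k` after the deletion, so `0 ≤ δ_k ≤ d'_w(k)`.
-/

namespace Multiset

variable {α : Type*} (s : Multiset α)

theorem sum_range_countP_eq (f : α → ℕ) (k : ℕ) :
    ∑ i ∈ Finset.range (k + 1), s.countP (f · = i) = s.countP (f · ≤ k) := by
  induction s using Multiset.induction_on with
  | empty => simp
  | cons a s ih =>
    simp only [countP_cons, Finset.sum_add_distrib, ih, Finset.sum_ite_eq, Finset.mem_range,
      Nat.lt_succ_iff]

theorem countP_eq_countP_and_add_countP_and_not (p q : α → Prop) [DecidablePred p]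
    [DecidablePred q] :
    s.countP p = s.countP (fun a => p a ∧ q a) + s.countP (fun a => p a ∧ ¬q a) := by
  rw [countP_eq_countP_filter_add s p q, countP_filter, countP_filter]

theorem countP_and_le (p q : α → Prop) [DecidablePred p] [DecidablePred q] :
    s.countP (fun a => p a ∧ q a) ≤ s.countP p := by
  rw [← countP_filter]
  exact countP_le_of_le p (filter_le q s)

theorem countP_le_eq_countP_le_add {f g : α → ℕ} (hfg : ∀ a, f a ≤ g a ∧ g a ≤ f a + 1)
    (k : ℕ) :
    s.countP (f · ≤ k) = s.countP (g · ≤ k) + s.countP (fun a => f a = k ∧ g a = k + 1) := by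
  rw [countP_eq_countP_and_add_countP_and_not s _ (g · ≤ k)]
  congr 1 <;> refine countP_congr rfl fun a _ => propext ?_ <;> grind

end Multiset

theorem Fin.val_succAbove_eq_or {n : ℕ} (p : Fin (n + 1)) (i : Fin n) :
    (p.succAbove i : ℕ) = i ∨ (p.succAbove i : ℕ) = i + 1 := by
  rcases lt_or_ge (Fin.castSucc i) p with h | h
  · simp [Fin.succAbove_of_castSucc_lt p i h]
  · simp [Fin.succAbove_of_le_castSucc p i h]

theorem dcount_eq_countP (v : ℕ) (X : Multiset (Equiv.Perm (Fin v))) (w : Fin v) (j : ℕ) :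
    dcount v X w j = X.countP (fun π => (π.symm w : ℕ) = j) :=
  Multiset.countP_congr rfl fun π _ => propext
    ⟨fun ⟨p, hp, hpw⟩ => by simp [← hpw, hp], fun h => ⟨π.symm w, h, by simp⟩⟩

theorem dcount_map_eq_countP {α : Type*} (v : ℕ) (X : Multiset α) (f : α → Equiv.Perm (Fin v))
    (w : Fin v) (j : ℕ) :
    dcount v (X.map f) w j = X.countP (fun a => ((f a).symm w : ℕ) = j) := by
  rw [dcount_eq_countP, Multiset.countP_map, Multiset.countP_eq_card_filter]

theorem finSuccEquiv'_symm_apply_deleteSym {n : ℕ} (π : Equiv.Perm (Fin (n + 1)))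
    {w w' : Fin (n + 1)} {w'' : Fin n} (hw : finSuccEquiv' w' w = some w'') :
    π.symm w = (π.symm w').succAbove ((deleteSym w' π).symm w'') := by
  set e := (finSuccEquiv' (π.symm w')).symm.trans (π.trans (finSuccEquiv' w'))
  have he : e.symm (some w'') = finSuccEquiv' (π.symm w') (π.symm w) := by
    simp only [e, Equiv.symm_trans_apply, Equiv.symm_symm]
    rw [← hw, Equiv.symm_apply_apply]
  have hnone : e none = none := by
    simp only [e, Equiv.trans_apply, finSuccEquiv'_symm_none, Equiv.apply_symm_apply,
      finSuccEquiv'_at]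
  obtain ⟨m, hm⟩ : ∃ m, e.symm (some w'') = some m :=
    Option.ne_none_iff_exists'.mp fun h =>
      Option.some_ne_none w'' (e.symm.injective (h.trans (e.symm_apply_eq.mpr hnone.symm).symm))
  have hdel : e.symm (some w'') = some ((deleteSym w' π).symm w'') := by
    rw [deleteSym, Equiv.removeNone_symm, Equiv.removeNone_some _ ⟨m, hm⟩]
  rw [← finSuccEquiv'_symm_some, ← hdel, he, Equiv.symm_apply_apply]

theorem stmt10_general (n : ℕ)
    (X : Multiset (Equiv.Perm (Fin (n + 1))))
    (w w' : Fin (n + 1))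
    (w'' : Fin n) (hrelabel : finSuccEquiv' w' w = some w'')
    (k : ℕ) :
    0 ≤ ∑ i ∈ Finset.range (k + 1),
        ((dcount n (X.map (deleteSym w')) w'' i : ℤ) - (dcount (n + 1) X w i : ℤ)) ∧
      ∑ i ∈ Finset.range (k + 1),
        ((dcount n (X.map (deleteSym w')) w'' i : ℤ) - (dcount (n + 1) X w i : ℤ)) ≤
        (dcount n (X.map (deleteSym w')) w'' k : ℤ) := by
  have hpos : ∀ π : Equiv.Perm (Fin (n + 1)), ((deleteSym w' π).symm w'' : ℕ) ≤ π.symm w ∧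
      (π.symm w : ℕ) ≤ (deleteSym w' π).symm w'' + 1 := fun π => by
    rw [finSuccEquiv'_symm_apply_deleteSym π hrelabel]
    rcases Fin.val_succAbove_eq_or (π.symm w') ((deleteSym w' π).symm w'') with h | h <;> omega
  have hδ : ∑ i ∈ Finset.range (k + 1),
      ((dcount n (X.map (deleteSym w')) w'' i : ℤ) - (dcount (n + 1) X w i : ℤ)) =
      X.countP (fun π => ((deleteSym w' π).symm w'' : ℕ) = k ∧ (π.symm w : ℕ) = k + 1) := by
    simp only [Finset.sum_sub_distrib, ← Nat.cast_sum, dcount_map_eq_countP]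
    simp only [dcount_eq_countP, Multiset.sum_range_countP_eq,
      X.countP_le_eq_countP_le_add hpos k]
    push_cast
    ring
  rw [hδ, dcount_map_eq_countP]
  exact ⟨by positivity, by exact_mod_cast X.countP_and_le _ _⟩

/-- Theorem 2.7: if `X'` is obtained from a PSCA `X` by deleting a symbol `w' ≠ w`
(where `w` gets relabelled to `w''`), then the partial sums
`δ_k = Σ_{i=0}^k (d'_w(i) - d_w(i))` satisfy `0 ≤ δ_k ≤ d'_w(k)` for `0 ≤ k ≤ v-2`. -/
theorem stmt10 (n t l : ℕ) (ht : 2 ≤ t) (htv : t ≤ n + 1)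
    (X : Multiset (Equiv.Perm (Fin (n + 1)))) (hX : IsPSCA (n + 1) t l X)
    (w w' : Fin (n + 1)) (hww' : w ≠ w')
    (w'' : Fin n) (hrelabel : finSuccEquiv' w' w = some w'')
    (k : ℕ) (hk : k ≤ n - 1) :
    0 ≤ ∑ i ∈ Finset.range (k + 1),
        ((dcount n (X.map (deleteSym w')) w'' i : ℤ) - (dcount (n + 1) X w i : ℤ)) ∧
      ∑ i ∈ Finset.range (k + 1),
        ((dcount n (X.map (deleteSym w')) w'' i : ℤ) - (dcount (n + 1) X w i : ℤ)) ≤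
        (dcount n (X.map (deleteSym w')) w'' k : ℤ) :=
  stmt10_general n X w w' w'' hrelabel k
end
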